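/- Let α ≥ 2 and β ≥ 1, let 0 < s < t, and let u_s and u_t be minimizers of E_s^{α,β}(·;f) and E_t^{α,β}(·;f), respectively. Then ‖Au_t − Au_s‖_H ≤ ((t − s)/t) ‖Au_t − f‖_H ≤ ((t − s)/t) ‖f‖_H. If the range condition holds, then ‖Au_t − Au_s‖_H ≤ J_min^{β/α} (t − s)/t^{(α−1)/α}; if additionally the source condition holds, then ‖Au_t − Au_s‖_H ≤ s_*^{1/(α−1)} J_min^{(β−1)/(α−1)} (t − s)/t^{(α−2)/(α−1)}. -/

import Mathlib

open Filter Topology Set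
open scoped ENNReal RealInnerProductSpace

noncomputable section

/-- The variational energy `E_t^{α,β}(u; f)`. -/
def En {X : Type*} [NormedAddCommGroup X] [NormedSpace ℝ X]
    {H : Type*} [NormedAddCommGroup H] [InnerProductSpace ℝ H]
    (A : X →L[ℝ] H) (J : X → ℝ≥0∞) (f : H) (t α β : ℝ) (u : X) : ℝ≥0∞ :=
  ENNReal.ofReal ((1 / α) * ‖A u - f‖ ^ α) + ENNReal.ofReal (t / β) * J u ^ β

/-- `u` is a minimizer of `E_t^{α,β}(·; f)`. -/
def IsMinimizer {X : Type*} [NormedAddCommGroup X] [NormedSpace ℝ X]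
    {H : Type*} [NormedAddCommGroup H] [InnerProductSpace ℝ H]
    (A : X →L[ℝ] H) (J : X → ℝ≥0∞) (f : H) (t α β : ℝ) (u : X) : Prop :=
  ∀ v, En A J f t α β u ≤ En A J f t α β v

/-- `J` is proper. -/
def IsProperFn {X : Type*} (J : X → ℝ≥0∞) : Prop := ∃ u, J u ≠ ⊤

/-- `J` is absolutely one-homogeneous. -/
def AbsOneHom {X : Type*} [NormedAddCommGroup X] [NormedSpace ℝ X] (J : X → ℝ≥0∞) : Prop :=
  ∀ (c : ℝ) (u : X), J (c • u) = ENNReal.ofReal |c| * J u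

/-- `J` is convex. -/
def EConvexFn {X : Type*} [NormedAddCommGroup X] [NormedSpace ℝ X] (J : X → ℝ≥0∞) : Prop :=
  ∀ (u v : X) (a b : ℝ), 0 ≤ a → 0 ≤ b → a + b = 1 →
    J (a • u + b • v) ≤ ENNReal.ofReal a * J u + ENNReal.ofReal b * J v

/-- The subdifferential of `J` at `u`; dual elements are represented as `X →L[ℝ] ℝ`. -/
def subdiff {X : Type*} [NormedAddCommGroup X] [NormedSpace ℝ X]
    (J : X → ℝ≥0∞) (u : X) : Set (X →L[ℝ] ℝ) :=
  {p | ∀ v, (J u : EReal) + ((p (v - u) : ℝ) : EReal) ≤ (J v : EReal)}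

/-- The adjoint `A* q` as an element of the dual of `X`. -/
def Astar {X : Type*} [NormedAddCommGroup X] [NormedSpace ℝ X]
    {H : Type*} [NormedAddCommGroup H] [InnerProductSpace ℝ H]
    (A : X →L[ℝ] H) (q : H) : X →L[ℝ] ℝ :=
  (innerSL ℝ q).comp A

/-- The set of norms `‖q‖` of source elements `q` for solutions of `Au = f`. -/
def SourceNorms {X : Type*} [NormedAddCommGroup X] [NormedSpace ℝ X]
    {H : Type*} [NormedAddCommGroup H] [InnerProductSpace ℝ H]
    (A : X →L[ℝ] H) (J : X → ℝ≥0∞) (f : H) : Set ℝ :=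
  {r | ∃ (u : X) (q : H), J u ≠ ⊤ ∧ A u = f ∧ Astar A q ∈ subdiff J u ∧ r = ‖q‖}

/-- The weak-star topology on the dual `Y →L[ℝ] ℝ` of `Y`. -/
def weakStar (Y : Type*) [NormedAddCommGroup Y] [NormedSpace ℝ Y] :
    TopologicalSpace (Y →L[ℝ] ℝ) :=
  TopologicalSpace.induced (fun (u : Y →L[ℝ] ℝ) (y : Y) => u y) inferInstance

/-- `J` is lower semicontinuous with respect to the weak-star topology. -/
def WeakStarLSC {Y : Type*} [NormedAddCommGroup Y] [NormedSpace ℝ Y]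
    (J : (Y →L[ℝ] ℝ) → ℝ≥0∞) : Prop :=
  @LowerSemicontinuous _ _ (weakStar Y) _ J

/-- `A` is weak-star-to-weak continuous. -/
def WeakStarToWeakCont {Y : Type*} [NormedAddCommGroup Y] [NormedSpace ℝ Y]
    {H : Type*} [NormedAddCommGroup H] [InnerProductSpace ℝ H]
    (A : (Y →L[ℝ] ℝ) →L[ℝ] H) : Prop :=
  ∀ h : H, @Continuous _ _ (weakStar Y) _ (fun u => (⟪A u, h⟫ : ℝ))

/-- Assumption 1: `‖A ·‖` is a norm on `N(J)` equivalent to the restriction of `‖·‖`. -/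
def ANormEquiv {X : Type*} [NormedAddCommGroup X] [NormedSpace ℝ X]
    {H : Type*} [NormedAddCommGroup H] [InnerProductSpace ℝ H]
    (A : X →L[ℝ] H) (J : X → ℝ≥0∞) : Prop :=
  ∃ c > (0:ℝ), ∃ C > (0:ℝ), ∀ u, J u = 0 → c * ‖u‖ ≤ ‖A u‖ ∧ ‖A u‖ ≤ C * ‖u‖

/-- `PA` is the `A`-orthogonal projection onto `N(J)`. -/
def IsAProj {X : Type*} [NormedAddCommGroup X] [NormedSpace ℝ X]
    {H : Type*} [NormedAddCommGroup H] [InnerProductSpace ℝ H]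
    (A : X →L[ℝ] H) (J : X → ℝ≥0∞) (PA : H → X) : Prop :=
  ∀ g : H, J (PA g) = 0 ∧ (∀ u, J u = 0 → ‖A (PA g) - g‖ ≤ ‖A u - g‖) ∧
    (∀ u, J u = 0 → ‖A u - g‖ ≤ ‖A (PA g) - g‖ → u = PA g)

/-- Assumption 2: generalized Poincaré inequality. -/
def PoincareIneq {X : Type*} [NormedAddCommGroup X] [NormedSpace ℝ X]
    {H : Type*} [NormedAddCommGroup H] [InnerProductSpace ℝ H]
    (A : X →L[ℝ] H) (J : X → ℝ≥0∞) (PA : H → X) : Prop :=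
  ∃ C > (0:ℝ), ∀ u, ENNReal.ofReal ‖u - PA (A u)‖ ≤ ENNReal.ofReal C * J u

/-!
Perturbing a minimizer `u` of `E_t^{α,β}(·; f)` along the segment towards any `v` with
`J v < ∞` and using the convexity of `J` gives the variational inequality
`0 ≤ ‖Au - f‖^(α-2) ⟪Au - f, Av - Au⟫ + t J(u)^(β-1) (J v - J u)`.
Along the path `J(u_t)` decreases and `‖Au_t - f‖` increases in `t`, so the two variational
inequalities for `u_s` and `u_t`, tested against each other, give
`s ‖b‖^(α-2) ⟪b, b - a⟫ ≤ t ‖a‖^(α-2) ⟪a, b - a⟫` for `a = Au_s - f`, `b = Au_t - f`;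
since `‖a‖ ≤ ‖b‖` this forces `t ‖b - a‖² ≤ (t - s) ⟪b, b - a⟫`.
Testing the variational inequality with a solution `u†` of `Au = f` bounds `‖Au_t - f‖^α` by
`t J(u†)^β`; under the source condition the subgradient inequality bounds `J(u†) - J(u_t)` by
`‖q‖ ‖Au_t - f‖`, which improves this to `‖Au_t - f‖^(α-1) ≤ t J(u†)^(β-1) ‖q‖`.
-/

theorem div_mul_rpow_eq_div_rpow (x : ℝ) {t p q : ℝ} (ht : 0 < t) (hpq : p + q = 1) :
    x / t * t ^ p = x / t ^ q := by
  rw [div_mul_eq_mul_div, div_eq_div_iff ht.ne' (Real.rpow_pos_of_pos ht q).ne', mul_assoc,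
    ← Real.rpow_add ht, hpq, Real.rpow_one]

theorem rpow_sub_one_le_of_rpow_le_mul {x K α : ℝ} (hx : 0 ≤ x) (hK : 0 ≤ K) (hα : 1 < α)
    (h : x ^ α ≤ K * x) : x ^ (α - 1) ≤ K := by
  rcases hx.eq_or_lt with rfl | hx
  · rwa [Real.zero_rpow (by linarith)]
  · rw [← sub_add_cancel α 1, Real.rpow_add_one hx.ne'] at h
    exact le_of_mul_le_mul_right h hx

theorem le_mul_sInf_of_forall_le_mul {S : Set ℝ} (hS : S.Nonempty) {c g : ℝ} (hc : 0 ≤ c)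
    (h : ∀ r ∈ S, g ≤ c * r) : g ≤ c * sInf S := by
  rw [← smul_eq_mul, ← Real.sInf_smul_of_nonneg hc]
  exact le_csInf hS.smul_set (by rintro _ ⟨r, hr, rfl⟩; exact h r hr)

theorem HasDerivAt.nonneg_of_forall_Icc_le {φ : ℝ → ℝ} {φ' : ℝ} (hφ : HasDerivAt φ φ' 0)
    (hle : ∀ ε ∈ Icc (0 : ℝ) 1, φ 0 ≤ φ ε) : 0 ≤ φ' := by
  have hmin : IsLocalMinOn φ (Icc 0 1) 0 := IsMinOn.localize hle
  simpa using hmin.hasFDerivWithinAt_nonneg hφ.hasFDerivAt.hasFDerivWithinAt (y := 1)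
    (mem_posTangentConeAt_of_segment_subset (by rw [zero_add, segment_eq_Icc zero_le_one]))

theorem norm_sub_le_of_mul_rpow_inner_le {H : Type*} [NormedAddCommGroup H]
    [InnerProductSpace ℝ H] {a b : H} {p s t : ℝ} (hp : 0 ≤ p) (hs : 0 ≤ s) (hst : s ≤ t)
    (ht : 0 < t) (hab : ‖a‖ ≤ ‖b‖)
    (h : s * (‖b‖ ^ p * ⟪b, b - a⟫) ≤ t * (‖a‖ ^ p * ⟪a, b - a⟫)) :
    ‖b - a‖ ≤ (t - s) / t * ‖b‖ := by
  rcases eq_or_ne b 0 with rfl | hb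
  · rw [norm_zero, norm_le_zero_iff] at hab
    simp [hab]
  set d := b - a with hd
  have hbd : ⟪b, d⟫ = ⟪a, d⟫ + ‖d‖ ^ 2 := by
    rw [← real_inner_self_eq_norm_sq, ← inner_add_left, hd, add_sub_cancel]
  have hbd0 : 0 ≤ ⟪b, d⟫ := by
    rw [hd, inner_sub_right, real_inner_self_eq_norm_sq]
    nlinarith [real_inner_le_norm b a, norm_nonneg a]
  have hbp : 0 < ‖b‖ ^ p := Real.rpow_pos_of_pos (norm_pos_iff.2 hb) p
  have had : 0 ≤ ⟪a, d⟫ := by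
    by_contra! had
    have ha : a ≠ 0 := by rintro rfl; simp at had
    have hap : 0 < ‖a‖ ^ p := Real.rpow_pos_of_pos (norm_pos_iff.2 ha) p
    nlinarith [mul_nonneg hs (mul_nonneg hbp.le hbd0), mul_pos ht (mul_pos hap (neg_pos.2 had))]
  have hsb : s * ⟪b, d⟫ ≤ t * ⟪a, d⟫ := by
    have hpow : ‖a‖ ^ p ≤ ‖b‖ ^ p := Real.rpow_le_rpow (norm_nonneg _) hab hp
    refine le_of_mul_le_mul_left ?_ hbp
    calc ‖b‖ ^ p * (s * ⟪b, d⟫) = s * (‖b‖ ^ p * ⟪b, d⟫) := by ring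
      _ ≤ t * (‖a‖ ^ p * ⟪a, d⟫) := h
      _ ≤ t * (‖b‖ ^ p * ⟪a, d⟫) := by gcongr
      _ = ‖b‖ ^ p * (t * ⟪a, d⟫) := by ring
  have hquad : t * ‖d‖ ^ 2 ≤ (t - s) * ‖b‖ * ‖d‖ := by
    nlinarith [real_inner_le_norm b d]
  rw [div_mul_eq_mul_div, le_div_iff₀ ht]
  rcases (norm_nonneg d).eq_or_lt with hd0 | hd0
  · rw [← hd0, zero_mul]
    exact mul_nonneg (by linarith) (norm_nonneg b)
  · exact le_of_mul_le_mul_right (by linarith) hd0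

section Energy

variable {X : Type*} [NormedAddCommGroup X] [NormedSpace ℝ X]
  {H : Type*} [NormedAddCommGroup H] [InnerProductSpace ℝ H]
  {A : X →L[ℝ] H} {J : X → ℝ≥0∞} {f : H} {s t α β : ℝ} {u v w : X}

theorem AbsOneHom.apply_zero (hhom : AbsOneHom J) : J 0 = 0 := by
  simpa using hhom 0 0

theorem EConvexFn.apply_le_ofReal (hconv : EConvexFn J) (hu : J u ≠ ⊤) (hv : J v ≠ ⊤)
    {a b : ℝ} (ha : 0 ≤ a) (hb : 0 ≤ b) (hab : a + b = 1) :
    J (a • u + b • v) ≤ ENNReal.ofReal (a * (J u).toReal + b * (J v).toReal) := by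
  rw [ENNReal.ofReal_add (by positivity) (by positivity), ENNReal.ofReal_mul ha,
    ENNReal.ofReal_mul hb, ENNReal.ofReal_toReal hu, ENNReal.ofReal_toReal hv]
  exact hconv u v a b ha hb hab

theorem toReal_add_inner_le_of_Astar_mem_subdiff {q : H} (hq : Astar A q ∈ subdiff J w)
    (hw : J w ≠ ⊤) (hv : J v ≠ ⊤) : (J w).toReal + ⟪q, A v - A w⟫ ≤ (J v).toReal := by
  have h := hq v
  rw [← EReal.coe_ennreal_toReal hw, ← EReal.coe_ennreal_toReal hv] at h
  simp only [Astar, ContinuousLinearMap.comp_apply, innerSL_apply_apply, map_sub] at h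
  rw [inner_sub_right]
  exact_mod_cast h

theorem En_ne_top (hβ : 0 ≤ β) (hu : J u ≠ ⊤) : En A J f t α β u ≠ ⊤ := by
  simp [En, ENNReal.mul_ne_top, ENNReal.rpow_ne_top_of_nonneg hβ hu]

theorem toReal_En (ht : 0 ≤ t) (hα : 0 ≤ α) (hβ : 0 ≤ β) (hu : J u ≠ ⊤) :
    (En A J f t α β u).toReal = 1 / α * ‖A u - f‖ ^ α + t / β * (J u).toReal ^ β := by
  rw [En, ENNReal.toReal_add ENNReal.ofReal_ne_top
      (ENNReal.mul_ne_top ENNReal.ofReal_ne_top (ENNReal.rpow_ne_top_of_nonneg hβ hu)),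
    ENNReal.toReal_mul, ENNReal.toReal_ofReal (mul_nonneg (one_div_nonneg.2 hα) (by positivity)),
    ENNReal.toReal_ofReal (div_nonneg ht hβ), ENNReal.toReal_rpow]

namespace IsMinimizer

theorem J_ne_top (hproper : IsProperFn J) (ht : 0 < t) (hβ : 0 < β)
    (hmin : IsMinimizer A J f t α β u) : J u ≠ ⊤ := by
  obtain ⟨w, hw⟩ := hproper
  intro hu
  have htop : En A J f t α β u = ⊤ := by
    simp [En, hu, ENNReal.top_rpow_of_pos hβ, div_pos ht hβ]
  exact En_ne_top hβ.le hw (top_le_iff.1 (htop ▸ hmin w))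

theorem energy_le (ht : 0 ≤ t) (hα : 0 ≤ α) (hβ : 0 ≤ β) (hmin : IsMinimizer A J f t α β u)
    (hu : J u ≠ ⊤) (hv : J v ≠ ⊤) :
    1 / α * ‖A u - f‖ ^ α + t / β * (J u).toReal ^ β ≤
      1 / α * ‖A v - f‖ ^ α + t / β * (J v).toReal ^ β := by
  rw [← toReal_En ht hα hβ hu, ← toReal_En ht hα hβ hv]
  exact ENNReal.toReal_mono (En_ne_top hβ hv) (hmin v)

theorem toReal_J_le_of_map_eq (ht : 0 < t) (hα : 0 < α) (hβ : 0 < β)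
    (hmin : IsMinimizer A J f t α β u) (hu : J u ≠ ⊤) (hv : J v ≠ ⊤) (hAv : A v = f) :
    (J u).toReal ≤ (J v).toReal := by
  have h := hmin.energy_le ht.le hα.le hβ.le hu hv
  rw [hAv, sub_self, norm_zero, Real.zero_rpow hα.ne', mul_zero, zero_add] at h
  have hres : 0 ≤ 1 / α * ‖A u - f‖ ^ α := by positivity
  rw [← Real.rpow_le_rpow_iff ENNReal.toReal_nonneg ENNReal.toReal_nonneg hβ]
  exact le_of_mul_le_mul_left (by linarith) (div_pos ht hβ)

theorem norm_sub_le_norm (h0 : J 0 = 0) (ht : 0 ≤ t) (hα : 0 < α) (hβ : 0 < β)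
    (hmin : IsMinimizer A J f t α β u) (hu : J u ≠ ⊤) : ‖A u - f‖ ≤ ‖f‖ := by
  have h := hmin.energy_le ht hα.le hβ.le hu (v := 0) (by simp [h0])
  rw [map_zero, zero_sub, norm_neg, h0, ENNReal.toReal_zero, Real.zero_rpow hβ.ne', mul_zero,
    add_zero] at h
  have hJ : 0 ≤ t / β * (J u).toReal ^ β := mul_nonneg (div_nonneg ht hβ.le) (by positivity)
  rw [← Real.rpow_le_rpow_iff (norm_nonneg _) (norm_nonneg _) hα]
  exact le_of_mul_le_mul_left (by linarith) (one_div_pos.2 hα)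

theorem toReal_J_le_of_lt {us ut : X} (hs : 0 ≤ s) (hst : s < t) (hα : 0 ≤ α) (hβ : 0 < β)
    (hus : IsMinimizer A J f s α β us) (hut : IsMinimizer A J f t α β ut)
    (hJs : J us ≠ ⊤) (hJt : J ut ≠ ⊤) : (J ut).toReal ≤ (J us).toReal := by
  have h1 := hut.energy_le (hs.trans hst.le) hα hβ.le hJt hJs
  have h2 := hus.energy_le hs hα hβ.le hJs hJt
  rw [← Real.rpow_le_rpow_iff ENNReal.toReal_nonneg ENNReal.toReal_nonneg hβ]
  refine le_of_mul_le_mul_left ?_ (div_pos (sub_pos.2 hst) hβ)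
  rw [sub_div, sub_mul, sub_mul]
  linarith

theorem norm_sub_le_of_lt {us ut : X} (hs : 0 ≤ s) (hst : s < t) (hα : 0 < α) (hβ : 0 < β)
    (hus : IsMinimizer A J f s α β us) (hut : IsMinimizer A J f t α β ut)
    (hJs : J us ≠ ⊤) (hJt : J ut ≠ ⊤) : ‖A us - f‖ ≤ ‖A ut - f‖ := by
  have hJ := toReal_J_le_of_lt hs hst hα.le hβ hus hut hJs hJt
  have h := hus.energy_le hs hα.le hβ.le hJs hJt
  have hJβ : s / β * (J ut).toReal ^ β ≤ s / β * (J us).toReal ^ β :=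
    mul_le_mul_of_nonneg_left (Real.rpow_le_rpow ENNReal.toReal_nonneg hJ hβ.le)
      (div_nonneg hs hβ.le)
  rw [← Real.rpow_le_rpow_iff (norm_nonneg _) (norm_nonneg _) hα]
  exact le_of_mul_le_mul_left (by linarith) (one_div_pos.2 hα)

theorem euler_lagrange (hconv : EConvexFn J) (ht : 0 ≤ t) (hα : 1 < α) (hβ : 1 ≤ β)
    (hmin : IsMinimizer A J f t α β u) (hu : J u ≠ ⊤) (hv : J v ≠ ⊤) :
    0 ≤ ‖A u - f‖ ^ (α - 2) * ⟪A u - f, A v - A u⟫ +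
      t * (J u).toReal ^ (β - 1) * ((J v).toReal - (J u).toReal) := by
  have hα0 : 0 < α := by linarith
  have hβ0 : 0 < β := by linarith
  set b := A u - f
  set c := A v - A u
  set j := (J u).toReal
  set δ := (J v).toReal - j
  -- `φ` agrees with the energy at `u` and, by convexity of `J`, dominates it on the segment to `v`
  let φ : ℝ → ℝ := fun ε => 1 / α * ‖b + ε • c‖ ^ α + t / β * (j + ε * δ) ^ β
  have hφ : HasDerivAt φ (‖b‖ ^ (α - 2) * ⟪b, c⟫ + t * j ^ (β - 1) * δ) 0 := by
    have hres : HasDerivAt (fun ε : ℝ => ‖b + ε • c‖ ^ α) (α * ‖b‖ ^ (α - 2) * ⟪b, c⟫) 0 := by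
      have h := (hasFDerivAt_norm_rpow b hα).comp_hasDerivAt_of_eq (0 : ℝ)
        (((hasDerivAt_id 0).smul_const c).const_add b) (by simp)
      simp only [Function.comp_def, id, one_smul, FunLike.coe_smul, Pi.smul_apply,
        innerSL_apply_apply, smul_eq_mul] at h
      exact h
    have hreg : HasDerivAt (fun ε : ℝ => (j + ε * δ) ^ β) (δ * β * j ^ (β - 1)) 0 := by
      simpa using (((hasDerivAt_id 0).mul_const δ).const_add j).rpow_const (Or.inr hβ)
    exact ((hres.const_mul (1 / α)).add (hreg.const_mul (t / β))).congr_deriv (by field_simp)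
  refine hφ.nonneg_of_forall_Icc_le fun ε ⟨hε0, hε1⟩ => ?_
  have hconvε := hconv.apply_le_ofReal hu hv (sub_nonneg.2 hε1) hε0 (sub_add_cancel 1 ε)
  have hJε : J ((1 - ε) • u + ε • v) ≠ ⊤ := ne_top_of_le_ne_top ENNReal.ofReal_ne_top hconvε
  have hJεle : (J ((1 - ε) • u + ε • v)).toReal ≤ j + ε * δ := by
    refine (ENNReal.toReal_le_of_le_ofReal ?_ hconvε).trans_eq (by ring)
    exact add_nonneg (mul_nonneg (by linarith) ENNReal.toReal_nonneg)
      (mul_nonneg hε0 ENNReal.toReal_nonneg)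
  have hAε : A ((1 - ε) • u + ε • v) - f = b + ε • c := by
    simp only [map_add, map_smul, b, c]
    module
  calc φ 0 = 1 / α * ‖A u - f‖ ^ α + t / β * j ^ β := by simp [φ, b]
    _ ≤ 1 / α * ‖b + ε • c‖ ^ α + t / β * (J ((1 - ε) • u + ε • v)).toReal ^ β :=
      hAε ▸ hmin.energy_le ht hα0.le hβ0.le hu hJε
    _ ≤ φ ε := add_le_add_right (mul_le_mul_of_nonneg_left
      (Real.rpow_le_rpow ENNReal.toReal_nonneg hJεle hβ0.le) (div_nonneg ht hβ0.le)) _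

theorem rpow_norm_sub_le (hconv : EConvexFn J) (ht : 0 ≤ t) (hα : 1 < α) (hβ : 1 ≤ β)
    (hmin : IsMinimizer A J f t α β u) (hu : J u ≠ ⊤) (hv : J v ≠ ⊤) (hAv : A v = f) :
    ‖A u - f‖ ^ α ≤ t * (J u).toReal ^ (β - 1) * ((J v).toReal - (J u).toReal) := by
  have h := hmin.euler_lagrange hconv ht hα hβ hu hv
  have hdir : A v - A u = -(A u - f) := by rw [hAv, neg_sub]
  rw [hdir, inner_neg_right, real_inner_self_eq_norm_sq] at h
  have hpow : ‖A u - f‖ ^ (α - 2) * ‖A u - f‖ ^ 2 = ‖A u - f‖ ^ α := by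
    rw [← Real.rpow_natCast, ← Real.rpow_add' (norm_nonneg _) (by norm_num; linarith)]
    norm_num
  linarith

theorem norm_map_sub_map_le {us ut : X} (hproper : IsProperFn J) (hconv : EConvexFn J)
    (hα : 2 ≤ α) (hβ : 1 ≤ β) (hs : 0 < s) (hst : s < t)
    (hus : IsMinimizer A J f s α β us) (hut : IsMinimizer A J f t α β ut) :
    ‖A ut - A us‖ ≤ (t - s) / t * ‖A ut - f‖ := by
  have ht := hs.trans hst
  have hJs := hus.J_ne_top hproper hs (by linarith)
  have hJt := hut.J_ne_top hproper ht (by linarith)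
  have hJ := toReal_J_le_of_lt hs.le hst (by linarith) (by linarith) hus hut hJs hJt
  have hELt := hut.euler_lagrange hconv ht.le (by linarith) hβ hJt hJs
  have hELs := hus.euler_lagrange hconv hs.le (by linarith) hβ hJs hJt
  set a := A us - f
  set b := A ut - f
  have hdiff : A ut - A us = b - a := (sub_sub_sub_cancel_right _ _ f).symm
  have hdiff' : A us - A ut = -(b - a) := by rw [← hdiff, neg_sub]
  rw [hdiff', inner_neg_right] at hELt
  rw [hdiff] at hELs ⊢
  refine norm_sub_le_of_mul_rpow_inner_le (p := α - 2) (by linarith) hs.le hst.le ht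
    (norm_sub_le_of_lt hs.le hst (by linarith) (by linarith) hus hut hJs hJt) ?_
  set δ := (J us).toReal - (J ut).toReal
  have hδ : 0 ≤ δ := sub_nonneg.2 hJ
  have hpow : (J ut).toReal ^ (β - 1) ≤ (J us).toReal ^ (β - 1) :=
    Real.rpow_le_rpow ENNReal.toReal_nonneg hJ (by linarith)
  calc s * (‖b‖ ^ (α - 2) * ⟪b, b - a⟫) ≤ s * (t * (J ut).toReal ^ (β - 1) * δ) :=
        mul_le_mul_of_nonneg_left (by linarith) hs.le
    _ = s * t * ((J ut).toReal ^ (β - 1) * δ) := by ring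
    _ ≤ s * t * ((J us).toReal ^ (β - 1) * δ) := by gcongr
    _ = t * (s * (J us).toReal ^ (β - 1) * δ) := by ring
    _ ≤ t * (‖a‖ ^ (α - 2) * ⟪a, b - a⟫) := mul_le_mul_of_nonneg_left (by linarith) ht.le

theorem norm_sub_le_of_map_eq (hconv : EConvexFn J) (ht : 0 < t) (hα : 1 < α) (hβ : 1 ≤ β)
    (hmin : IsMinimizer A J f t α β u) (hu : J u ≠ ⊤) (hv : J v ≠ ⊤) (hAv : A v = f) :
    ‖A u - f‖ ≤ t ^ α⁻¹ * (J v).toReal ^ (β / α) := by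
  have hJ := hmin.toReal_J_le_of_map_eq ht (by linarith) (by linarith) hu hv hAv
  have hbound : ‖A u - f‖ ^ α ≤ t * (J v).toReal ^ β := calc
    _ ≤ t * (J u).toReal ^ (β - 1) * ((J v).toReal - (J u).toReal) :=
      hmin.rpow_norm_sub_le hconv ht.le hα hβ hu hv hAv
    _ ≤ t * (J v).toReal ^ (β - 1) * (J v).toReal := by
      gcongr
      linarith [ENNReal.toReal_nonneg (a := J u)]
    _ = t * (J v).toReal ^ β := by
      rw [mul_assoc, ← Real.rpow_add_one' ENNReal.toReal_nonneg (by linarith), sub_add_cancel]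
  calc ‖A u - f‖ ≤ (t * (J v).toReal ^ β) ^ α⁻¹ :=
        (Real.le_rpow_inv_iff_of_pos (norm_nonneg _) (by positivity) (by linarith)).2 hbound
    _ = t ^ α⁻¹ * (J v).toReal ^ (β / α) := by
        rw [Real.mul_rpow ht.le (by positivity), ← Real.rpow_mul ENNReal.toReal_nonneg,
          div_eq_mul_inv]

theorem rpow_norm_sub_le_of_Astar_mem_subdiff {q : H} (hconv : EConvexFn J) (ht : 0 < t)
    (hα : 1 < α) (hβ : 1 ≤ β) (hmin : IsMinimizer A J f t α β u) (hu : J u ≠ ⊤)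
    (hw : J w ≠ ⊤) (hAw : A w = f) (hq : Astar A q ∈ subdiff J w) :
    ‖A u - f‖ ^ (α - 1) ≤ t * (J w).toReal ^ (β - 1) * ‖q‖ := by
  have hJ := hmin.toReal_J_le_of_map_eq ht (by linarith) (by linarith) hu hw hAw
  have hsub := toReal_add_inner_le_of_Astar_mem_subdiff hq hw hu
  rw [hAw] at hsub
  have hgap : (J w).toReal - (J u).toReal ≤ ‖q‖ * ‖A u - f‖ := by
    linarith [neg_le_of_abs_le (abs_real_inner_le_norm q (A u - f))]
  refine rpow_sub_one_le_of_rpow_le_mul (norm_nonneg _) (by positivity) hα ?_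
  calc ‖A u - f‖ ^ α ≤ t * (J u).toReal ^ (β - 1) * ((J w).toReal - (J u).toReal) :=
        hmin.rpow_norm_sub_le hconv ht.le hα hβ hu hw hAw
    _ ≤ t * (J w).toReal ^ (β - 1) * (‖q‖ * ‖A u - f‖) := by gcongr
    _ = t * (J w).toReal ^ (β - 1) * ‖q‖ * ‖A u - f‖ := by ring

theorem norm_sub_le_of_source (hconv : EConvexFn J) (ht : 0 < t) (hα : 1 < α) (hβ : 1 ≤ β)
    (hmin : IsMinimizer A J f t α β u) (hu : J u ≠ ⊤) (hv : J v ≠ ⊤) (hAv : A v = f)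
    (hJv : ∀ w, A w = f → J v ≤ J w) (hsrc : ∃ q : H, Astar A q ∈ subdiff J v) :
    ‖A u - f‖ ≤ t ^ (α - 1)⁻¹ * (J v).toReal ^ ((β - 1) / (α - 1)) *
      sInf (SourceNorms A J f) ^ (α - 1)⁻¹ := by
  obtain ⟨q, hq⟩ := hsrc
  have hS0 : 0 ≤ sInf (SourceNorms A J f) :=
    Real.sInf_nonneg (by rintro _ ⟨-, q, -, -, -, rfl⟩; exact norm_nonneg q)
  have hbound : ‖A u - f‖ ^ (α - 1) ≤ t * (J v).toReal ^ (β - 1) * sInf (SourceNorms A J f) := by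
    have hS : (SourceNorms A J f).Nonempty := ⟨‖q‖, v, q, hv, hAv, hq, rfl⟩
    refine le_mul_sInf_of_forall_le_mul hS (by positivity) ?_
    rintro _ ⟨w, q, hw, hAw, hq, rfl⟩
    have hJw : (J w).toReal = (J v).toReal := by
      have hle := toReal_add_inner_le_of_Astar_mem_subdiff hq hw hv
      rw [hAv, hAw, sub_self, inner_zero_right, add_zero] at hle
      exact le_antisymm hle ((ENNReal.toReal_le_toReal hv hw).2 (hJv w hAw))
    rw [← hJw]
    exact hmin.rpow_norm_sub_le_of_Astar_mem_subdiff hconv ht hα hβ hu hw hAw hq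
  calc ‖A u - f‖ ≤ (t * (J v).toReal ^ (β - 1) * sInf (SourceNorms A J f)) ^ (α - 1)⁻¹ :=
        (Real.le_rpow_inv_iff_of_pos (norm_nonneg _) (by positivity) (by linarith)).2 hbound
    _ = _ := by
        rw [Real.mul_rpow (by positivity) hS0, Real.mul_rpow ht.le (by positivity),
          ← Real.rpow_mul ENNReal.toReal_nonneg, div_eq_mul_inv]

end IsMinimizer

end Energy

theorem lipschitz_estimates_forward_path_general
    {Y : Type*} [NormedAddCommGroup Y] [NormedSpace ℝ Y]
    {H : Type*} [NormedAddCommGroup H] [InnerProductSpace ℝ H]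
    (A : (Y →L[ℝ] ℝ) →L[ℝ] H) (J : (Y →L[ℝ] ℝ) → ℝ≥0∞) (f : H)
    (hproper : IsProperFn J) (hconv : EConvexFn J) (hhom : AbsOneHom J)
    (α β : ℝ) (hα : 2 ≤ α) (hβ : 1 ≤ β)
    (s t : ℝ) (hs : 0 < s) (hst : s < t)
    (us ut : Y →L[ℝ] ℝ)
    (hus : IsMinimizer A J f s α β us) (hut : IsMinimizer A J f t α β ut) :
    ‖A ut - A us‖ ≤ (t - s) / t * ‖A ut - f‖ ∧
    (t - s) / t * ‖A ut - f‖ ≤ (t - s) / t * ‖f‖ ∧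
    (∀ udag : Y →L[ℝ] ℝ, J udag ≠ ⊤ → A udag = f → (∀ w, A w = f → J udag ≤ J w) →
      ‖A ut - A us‖ ≤ (J udag).toReal ^ (β / α) * (t - s) / t ^ ((α - 1) / α)) ∧
    (∀ udag : Y →L[ℝ] ℝ, J udag ≠ ⊤ → A udag = f → (∀ w, A w = f → J udag ≤ J w) →
      (∃ q : H, Astar A q ∈ subdiff J udag) →
      ‖A ut - A us‖ ≤ sInf (SourceNorms A J f) ^ (1 / (α - 1)) *
        (J udag).toReal ^ ((β - 1) / (α - 1)) * (t - s) / t ^ ((α - 2) / (α - 1))) := by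
  have ht : 0 < t := hs.trans hst
  have hJt : J ut ≠ ⊤ := hut.J_ne_top hproper ht (by linarith)
  have hlip := IsMinimizer.norm_map_sub_map_le hproper hconv hα hβ hs hst hus hut
  have hts : 0 ≤ (t - s) / t := div_nonneg (by linarith) ht.le
  refine ⟨hlip, mul_le_mul_of_nonneg_left
    (hut.norm_sub_le_norm hhom.apply_zero ht.le (by linarith) (by linarith) hJt) hts, ?_, ?_⟩
  · intro udag hJ hA _
    calc ‖A ut - A us‖ ≤ (t - s) / t * (t ^ α⁻¹ * (J udag).toReal ^ (β / α)) := hlip.trans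
          (by gcongr; exact hut.norm_sub_le_of_map_eq hconv ht (by linarith) hβ hJt hJ hA)
      _ = _ := by
          have hα0 : α ≠ 0 := by positivity
          rw [← mul_assoc, div_mul_rpow_eq_div_rpow (q := (α - 1) / α) _ ht (by field_simp; ring)]
          ring
  · intro udag hJ hA hJmin hsrc
    calc ‖A ut - A us‖ ≤ (t - s) / t * (t ^ (α - 1)⁻¹ * (J udag).toReal ^ ((β - 1) / (α - 1)) *
          sInf (SourceNorms A J f) ^ (α - 1)⁻¹) := hlip.trans
          (by gcongr
              exact hut.norm_sub_le_of_source hconv ht (by linarith) hβ hJt hJ hA hJmin hsrc)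
      _ = _ := by
          have hα1 : α - 1 ≠ 0 := by linarith
          rw [one_div, mul_assoc, ← mul_assoc,
            div_mul_rpow_eq_div_rpow (q := (α - 2) / (α - 1)) _ ht (by field_simp; ring)]
          ring

/-- Lipschitz estimates, Lemma 3.4.
Let `α ≥ 2`, `β ≥ 1`, `0 < s < t`, and let `u_s`, `u_t` be minimizers of
`E_s^{α,β}(·;f)` and `E_t^{α,β}(·;f)`. Then
`‖Au_t − Au_s‖ ≤ ((t−s)/t)‖Au_t − f‖ ≤ ((t−s)/t)‖f‖`; under the range condition the
estimate improves to `C_R (t−s)/t^{(α−1)/α}` with `C_R = J_min^{β/α}`, and if also the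
source condition holds to `C_S (t−s)/t^{(α−2)/(α−1)}` with
`C_S = s_*^{1/(α−1)} J_min^{(β−1)/(α−1)}`. -/
theorem lipschitz_estimates_forward_path
    {Y : Type*} [NormedAddCommGroup Y] [NormedSpace ℝ Y]
    {H : Type*} [NormedAddCommGroup H] [InnerProductSpace ℝ H]
    (A : (Y →L[ℝ] ℝ) →L[ℝ] H) (J : (Y →L[ℝ] ℝ) → ℝ≥0∞) (f : H)
    (hproper : IsProperFn J) (hconv : EConvexFn J) (hlsc : WeakStarLSC J) (hhom : AbsOneHom J)
    (hdata : ∀ w, A w = f → J w ≠ 0)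
    (α β : ℝ) (hα : 2 ≤ α) (hβ : 1 ≤ β)
    (s t : ℝ) (hs : 0 < s) (hst : s < t)
    (us ut : Y →L[ℝ] ℝ)
    (hus : IsMinimizer A J f s α β us) (hut : IsMinimizer A J f t α β ut) :
    ‖A ut - A us‖ ≤ (t - s) / t * ‖A ut - f‖ ∧
    (t - s) / t * ‖A ut - f‖ ≤ (t - s) / t * ‖f‖ ∧
    (∀ udag : Y →L[ℝ] ℝ, J udag ≠ ⊤ → A udag = f → (∀ w, A w = f → J udag ≤ J w) →
      ‖A ut - A us‖ ≤ (J udag).toReal ^ (β / α) * (t - s) / t ^ ((α - 1) / α)) ∧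
    (∀ udag : Y →L[ℝ] ℝ, J udag ≠ ⊤ → A udag = f → (∀ w, A w = f → J udag ≤ J w) →
      (∃ q : H, Astar A q ∈ subdiff J udag) →
      ‖A ut - A us‖ ≤ sInf (SourceNorms A J f) ^ (1 / (α - 1)) *
        (J udag).toReal ^ ((β - 1) / (α - 1)) * (t - s) / t ^ ((α - 2) / (α - 1))) :=
  lipschitz_estimates_forward_path_general A J f hproper hconv hhom α β hα hβ s t hs hst us ut hus
    hut

end
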